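/- arXiv:1708.09375 — 4 statements merged into one kernel-verified Lean document; each statement's English description precedes it below -/
import Mathlib

section
/- Let X₁, X₂, Y be Killing vector fields relative to a metric g on ℝ² with [X₁,X₂] = 0, X₁ ∧ X₂ ≠ 0, and Y = f·X₁ for some smooth function f. Then for each j ∈ {1,2}: either g(X₁, Xⱼ) = 0, or Xⱼ(f) = 0 (i.e., [Xⱼ, Y] = 0). -/
/-- Partial derivative in the x-direction. -/
noncomputable def pdx (h : ℝ × ℝ → ℝ) (p : ℝ × ℝ) : ℝ := fderiv ℝ h p (1, 0)

/-- Partial derivative in the y-direction. -/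
noncomputable def pdy (h : ℝ × ℝ → ℝ) (p : ℝ × ℝ) : ℝ := fderiv ℝ h p (0, 1)

/-- The x-component of a vector field on the plane. -/
def Vx (X : ℝ × ℝ → ℝ × ℝ) : ℝ × ℝ → ℝ := fun p => (X p).1

/-- The y-component of a vector field on the plane. -/
def Vy (X : ℝ × ℝ → ℝ × ℝ) : ℝ × ℝ → ℝ := fun p => (X p).2

/-- xx-component of the Lie derivative along X of the covariant metric tensor with
components gxx, gxy, gyy. -/
noncomputable def lieXX (X : ℝ × ℝ → ℝ × ℝ) (gxx gxy gyy : ℝ × ℝ → ℝ) (p : ℝ × ℝ) : ℝ :=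
  fderiv ℝ gxx p (X p) + 2 * (pdx (Vx X) p * gxx p + pdx (Vy X) p * gxy p)

/-- xy-component of the Lie derivative along X of the metric. -/
noncomputable def lieXY (X : ℝ × ℝ → ℝ × ℝ) (gxx gxy gyy : ℝ × ℝ → ℝ) (p : ℝ × ℝ) : ℝ :=
  fderiv ℝ gxy p (X p) + pdx (Vx X) p * gxy p + pdx (Vy X) p * gyy p
    + pdy (Vx X) p * gxx p + pdy (Vy X) p * gxy p

/-- yy-component of the Lie derivative along X of the metric. -/
noncomputable def lieYY (X : ℝ × ℝ → ℝ × ℝ) (gxx gxy gyy : ℝ × ℝ → ℝ) (p : ℝ × ℝ) : ℝ :=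
  fderiv ℝ gyy p (X p) + 2 * (pdy (Vx X) p * gxy p + pdy (Vy X) p * gyy p)

/-- X is a Killing vector field relative to the metric with components gxx, gxy, gyy,
i.e. the Lie derivative of the metric along X vanishes. -/
def IsKilling (X : ℝ × ℝ → ℝ × ℝ) (gxx gxy gyy : ℝ × ℝ → ℝ) : Prop :=
  ∀ p, lieXX X gxx gxy gyy p = 0 ∧ lieXY X gxx gxy gyy p = 0 ∧ lieYY X gxx gxy gyy p = 0

/-- Evaluation of the metric g = gxx dx⊗dx + gxy (dx⊗dy + dy⊗dx) + gyy dy⊗dy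
on two tangent vectors. -/
def gEval (gxx gxy gyy : ℝ × ℝ → ℝ) (p : ℝ × ℝ) (u v : ℝ × ℝ) : ℝ :=
  gxx p * u.1 * v.1 + gxy p * (u.1 * v.2 + u.2 * v.1) + gyy p * u.2 * v.2

/-- The Lie bracket [X,Y] of two vector fields on the plane. -/
noncomputable def vbracket (X Y : ℝ × ℝ → ℝ × ℝ) : ℝ × ℝ → ℝ × ℝ :=
  fun p => fderiv ℝ Y p (X p) - fderiv ℝ X p (Y p)

lemma fderiv_mul_apply' (f h : ℝ × ℝ → ℝ) (p v : ℝ × ℝ)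
    (hf : DifferentiableAt ℝ f p) (hh : DifferentiableAt ℝ h p) :
    fderiv ℝ (fun q => f q * h q) p v = fderiv ℝ f p v * h p + f p * fderiv ℝ h p v := by
  rw [fderiv_fun_mul hf hh]
  simp [smul_eq_mul]; ring

lemma lieXX_smul (gxx gxy gyy f : ℝ × ℝ → ℝ) (X₁ : ℝ × ℝ → ℝ × ℝ) (p : ℝ × ℝ)
    (hf : DifferentiableAt ℝ f p) (hX : DifferentiableAt ℝ X₁ p) :
    lieXX (fun q => f q • X₁ q) gxx gxy gyy p
      = f p * lieXX X₁ gxx gxy gyy p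
        + 2 * fderiv ℝ f p (1, 0) * (gxx p * (X₁ p).1 + gxy p * (X₁ p).2) := by
  unfold lieXX pdx Vx Vy
  simp only [Prod.smul_fst, Prod.smul_snd, smul_eq_mul]
  rw [fderiv_mul_apply' f (fun q => (X₁ q).1) p _ hf hX.fst,
      fderiv_mul_apply' f (fun q => (X₁ q).2) p _ hf hX.snd,
      (fderiv ℝ gxx p).map_smul]
  simp only [smul_eq_mul]
  ring

lemma lieYY_smul (gxx gxy gyy f : ℝ × ℝ → ℝ) (X₁ : ℝ × ℝ → ℝ × ℝ) (p : ℝ × ℝ)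
    (hf : DifferentiableAt ℝ f p) (hX : DifferentiableAt ℝ X₁ p) :
    lieYY (fun q => f q • X₁ q) gxx gxy gyy p
      = f p * lieYY X₁ gxx gxy gyy p
        + 2 * fderiv ℝ f p (0, 1) * (gxy p * (X₁ p).1 + gyy p * (X₁ p).2) := by
  unfold lieYY pdy Vx Vy
  simp only [Prod.smul_fst, Prod.smul_snd, smul_eq_mul]
  rw [fderiv_mul_apply' f (fun q => (X₁ q).1) p _ hf hX.fst,
      fderiv_mul_apply' f (fun q => (X₁ q).2) p _ hf hX.snd,
      (fderiv ℝ gyy p).map_smul]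
  simp only [smul_eq_mul]
  ring

lemma lieXY_smul (gxx gxy gyy f : ℝ × ℝ → ℝ) (X₁ : ℝ × ℝ → ℝ × ℝ) (p : ℝ × ℝ)
    (hf : DifferentiableAt ℝ f p) (hX : DifferentiableAt ℝ X₁ p) :
    lieXY (fun q => f q • X₁ q) gxx gxy gyy p
      = f p * lieXY X₁ gxx gxy gyy p
        + fderiv ℝ f p (1, 0) * (gxy p * (X₁ p).1 + gyy p * (X₁ p).2)
        + fderiv ℝ f p (0, 1) * (gxx p * (X₁ p).1 + gxy p * (X₁ p).2) := by
  unfold lieXY pdx pdy Vx Vy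
  simp only [Prod.smul_fst, Prod.smul_snd, smul_eq_mul]
  rw [fderiv_mul_apply' f (fun q => (X₁ q).1) p _ hf hX.fst,
      fderiv_mul_apply' f (fun q => (X₁ q).2) p _ hf hX.snd,
      fderiv_mul_apply' f (fun q => (X₁ q).1) p _ hf hX.fst,
      fderiv_mul_apply' f (fun q => (X₁ q).2) p _ hf hX.snd,
      (fderiv ℝ gxy p).map_smul]
  simp only [smul_eq_mul]
  ring

/-- if X₁, X₂ are commuting, pointwise independent Killing fields and
Y = f·X₁ is also Killing, then for each j either g(X₁,Xⱼ) = 0 or Xⱼ(f) = 0. -/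
theorem stmt_4 (gxx gxy gyy : ℝ × ℝ → ℝ)
    (hgxx : ContDiff ℝ (⊤ : ℕ∞) gxx) (hgxy : ContDiff ℝ (⊤ : ℕ∞) gxy) (hgyy : ContDiff ℝ (⊤ : ℕ∞) gyy)
    (hnd : ∀ p, gxx p * gyy p - gxy p ^ 2 ≠ 0)
    (X₁ X₂ : ℝ × ℝ → ℝ × ℝ) (h1 : ContDiff ℝ (⊤ : ℕ∞) X₁) (h2 : ContDiff ℝ (⊤ : ℕ∞) X₂)
    (f : ℝ × ℝ → ℝ) (hf : ContDiff ℝ (⊤ : ℕ∞) f)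
    (hK1 : IsKilling X₁ gxx gxy gyy) (hK2 : IsKilling X₂ gxx gxy gyy)
    (hKY : IsKilling (fun p => f p • X₁ p) gxx gxy gyy)
    (hcomm : ∀ p, vbracket X₁ X₂ p = 0)
    (hind : ∀ p, (X₁ p).1 * (X₂ p).2 - (X₁ p).2 * (X₂ p).1 ≠ 0) :
    ∀ Z ∈ ({X₁, X₂} : Set (ℝ × ℝ → ℝ × ℝ)),
      (∀ p : ℝ × ℝ, gEval gxx gxy gyy p (X₁ p) (Z p) = 0) ∨
      (∀ p : ℝ × ℝ, fderiv ℝ f p (Z p) = 0) := by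
  -- Pointwise linear algebra lemma.
  have alg : ∀ dfx dfy A B : ℝ, dfx * A = 0 → dfy * B = 0 → dfx * B + dfy * A = 0 →
      ¬ (A = 0 ∧ B = 0) → dfx = 0 ∧ dfy = 0 := by
    intro dfx dfy A B hA hB hAB hnz
    by_cases hA0 : A = 0
    · have hB0 : B ≠ 0 := fun h => hnz ⟨hA0, h⟩
      have hx : dfx = 0 := by
        have : dfx * B = 0 := by rw [hA0] at hAB; linarith
        rcases mul_eq_zero.mp this with h | h
        · exact h
        · exact absurd h hB0
      have hy : dfy = 0 := by
        rcases mul_eq_zero.mp hB with h | h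
        · exact h
        · exact absurd h hB0
      exact ⟨hx, hy⟩
    · have hx : dfx = 0 := by
        rcases mul_eq_zero.mp hA with h | h
        · exact h
        · exact absurd h hA0
      have hy : dfy = 0 := by
        have : dfy * A = 0 := by rw [hx] at hAB; linarith
        rcases mul_eq_zero.mp this with h | h
        · exact h
        · exact absurd h hA0
      exact ⟨hx, hy⟩
  -- The key fact: df vanishes identically.
  have key : ∀ p : ℝ × ℝ, fderiv ℝ f p (1, 0) = 0 ∧ fderiv ℝ f p (0, 1) = 0 := by
    intro p
    have hfd : DifferentiableAt ℝ f p := (hf.differentiable (by simp)) p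
    have hXd : DifferentiableAt ℝ X₁ p := (h1.differentiable (by simp)) p
    obtain ⟨eXX, eXY, eYY⟩ := hKY p
    obtain ⟨kXX, kXY, kYY⟩ := hK1 p
    rw [lieXX_smul gxx gxy gyy f X₁ p hfd hXd, kXX] at eXX
    rw [lieXY_smul gxx gxy gyy f X₁ p hfd hXd, kXY] at eXY
    rw [lieYY_smul gxx gxy gyy f X₁ p hfd hXd, kYY] at eYY
    have hA : fderiv ℝ f p (1, 0) * (gxx p * (X₁ p).1 + gxy p * (X₁ p).2) = 0 := by
      linear_combination eXX / 2
    have hB : fderiv ℝ f p (0, 1) * (gxy p * (X₁ p).1 + gyy p * (X₁ p).2) = 0 := by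
      linear_combination eYY / 2
    have hAB : fderiv ℝ f p (1, 0) * (gxy p * (X₁ p).1 + gyy p * (X₁ p).2)
        + fderiv ℝ f p (0, 1) * (gxx p * (X₁ p).1 + gxy p * (X₁ p).2) = 0 := by
      linear_combination eXY
    refine alg _ _ _ _ hA hB hAB ?_
    rintro ⟨hA0, hB0⟩
    have ha : (gxx p * gyy p - gxy p ^ 2) * (X₁ p).1 = 0 := by
      linear_combination gyy p * hA0 - gxy p * hB0
    have hb : (gxx p * gyy p - gxy p ^ 2) * (X₁ p).2 = 0 := by
      linear_combination gxx p * hB0 - gxy p * hA0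
    have h1z : (X₁ p).1 = 0 := by
      rcases mul_eq_zero.mp ha with h | h
      · exact absurd h (hnd p)
      · exact h
    have h2z : (X₁ p).2 = 0 := by
      rcases mul_eq_zero.mp hb with h | h
      · exact absurd h (hnd p)
      · exact h
    exact hind p (by rw [h1z, h2z]; ring)
  intro Z _
  right
  intro p
  obtain ⟨hx, hy⟩ := key p
  have hsplit : Z p = (Z p).1 • ((1 : ℝ), (0 : ℝ)) + (Z p).2 • ((0 : ℝ), (1 : ℝ)) := by
    ext <;> simp
  rw [hsplit, map_add, map_smul, map_smul, hx, hy]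
  simp
end

section
/- There is no pseudo-Riemannian metric g on ℝ² for which the three vector fields ∂_x, ∂_y, and X₃ = α(x∂_x + y∂_y) + y∂_x - x∂_y with α ≠ 0 are all Killing vector fields. -/
/-- for α ≠ 0 no pseudo-Riemannian metric on ℝ² has ∂x, ∂y and
X₃ = α(x∂x + y∂y) + y∂x - x∂y all as Killing vector fields. -/
theorem stmt_8 (α : ℝ) (hα : α ≠ 0) :
    ¬ ∃ gxx gxy gyy : ℝ × ℝ → ℝ,
      ContDiff ℝ (⊤ : ℕ∞) gxx ∧ ContDiff ℝ (⊤ : ℕ∞) gxy ∧ ContDiff ℝ (⊤ : ℕ∞) gyy ∧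
      (∀ p, gxx p * gyy p - gxy p ^ 2 ≠ 0) ∧
      IsKilling (fun _ => ((1 : ℝ), (0 : ℝ))) gxx gxy gyy ∧
      IsKilling (fun _ => ((0 : ℝ), (1 : ℝ))) gxx gxy gyy ∧
      IsKilling (fun p => (α * p.1 + p.2, α * p.2 - p.1)) gxx gxy gyy := by
  rintro ⟨gxx, gxy, gyy, _, _, _, hnd, _, _, h3⟩
  obtain ⟨e1, e2, e3⟩ := h3 (0, 0)
  have hVx : ∀ p : ℝ × ℝ, HasFDerivAt (fun q : ℝ × ℝ => α * q.1 + q.2)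
      (α • ContinuousLinearMap.fst ℝ ℝ ℝ + ContinuousLinearMap.snd ℝ ℝ ℝ) p := by
    intro p
    exact ((hasFDerivAt_fst (p := p)).const_mul α).add (hasFDerivAt_snd)
  have hVy : ∀ p : ℝ × ℝ, HasFDerivAt (fun q : ℝ × ℝ => α * q.2 - q.1)
      (α • ContinuousLinearMap.snd ℝ ℝ ℝ - ContinuousLinearMap.fst ℝ ℝ ℝ) p := by
    intro p
    exact ((hasFDerivAt_snd (p := p)).const_mul α).sub (hasFDerivAt_fst)
  have hx0 : (fun p : ℝ × ℝ => (α * p.1 + p.2, α * p.2 - p.1)) (0, 0) = ((0:ℝ), (0:ℝ)) := by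
    simp
  have hfx : fderiv ℝ (Vx fun p : ℝ × ℝ => (α * p.1 + p.2, α * p.2 - p.1)) (0, 0)
      = α • ContinuousLinearMap.fst ℝ ℝ ℝ + ContinuousLinearMap.snd ℝ ℝ ℝ := (hVx _).fderiv
  have hfy : fderiv ℝ (Vy fun p : ℝ × ℝ => (α * p.1 + p.2, α * p.2 - p.1)) (0, 0)
      = α • ContinuousLinearMap.snd ℝ ℝ ℝ - ContinuousLinearMap.fst ℝ ℝ ℝ := (hVy _).fderiv
  have hg0 : ∀ h : ℝ × ℝ → ℝ, fderiv ℝ h (0, 0) ((0:ℝ), (0:ℝ)) = 0 := fun h =>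
    map_zero (fderiv ℝ h (0, 0))
  simp only [lieXX, lieXY, lieYY, pdx, pdy, hx0, hg0, hfx, hfy,
    ContinuousLinearMap.add_apply, ContinuousLinearMap.sub_apply,
    ContinuousLinearMap.smul_apply, ContinuousLinearMap.coe_fst', ContinuousLinearMap.coe_snd',
    smul_eq_mul, mul_one, mul_zero, add_zero, zero_add, sub_zero, zero_sub] at e1 e2 e3
  have hd := hnd (0, 0)
  set a := gxx (0, 0)
  set b := gxy (0, 0)
  set c := gyy (0, 0)
  have h1 : b = α * a := by linarith
  have h2 : c = a + 2 * α * b := by linarith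
  have h3 : b + α * c = 0 := by linarith
  have hkey : α * a * (2 + 2 * α ^ 2) = 0 := by linear_combination h3 + (-1 - 2 * α ^ 2) * h1 + (-α) * h2
  have hpos : (0:ℝ) < 2 + 2 * α ^ 2 := by positivity
  have ha : a = 0 := by
    rcases mul_eq_zero.1 hkey with h | h
    · rcases mul_eq_zero.1 h with h | h
      · exact absurd h hα
      · exact h
    · linarith
  have hb : b = 0 := by rw [ha, mul_zero] at h1; exact h1
  have hc : c = 0 := by rw [ha, hb] at h2; simpa using h2
  apply hd
  rw [ha, hb, hc]; ring
end

section
/- Let V be a Lie algebra of vector fields on ℝ² containing X₁, X₂ with [X₁,X₂]=0 and X₁∧X₂ ≠ 0 (pointwise linear independence). Then every rank-one distribution D on ℝ² invariant under V (meaning [Y,X] ∈ D for all Y ∈ D, X ∈ V) is spanned by a constant-coefficient linear combination λ₁X₁ + λ₂X₂ with λ₁,λ₂ ∈ ℝ. -/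

lemma aux_const_dir (a b : ℝ × ℝ → ℝ)
    (ha : Differentiable ℝ a) (hb : Differentiable ℝ b)
    (hne : ∀ p, ¬(a p = 0 ∧ b p = 0))
    (hkey : ∀ p v, b p * fderiv ℝ a p v = a p * fderiv ℝ b p v) :
    ∃ l1 l2 : ℝ, (l1, l2) ≠ (0, 0) ∧ ∀ p, ∃ c : ℝ, 0 < c ∧ a p = c * l1 ∧ b p = c * l2 := by
  set r : ℝ × ℝ → ℝ := fun p => Real.sqrt (a p * a p + b p * b p) with hr_def
  have hs_pos : ∀ p, 0 < a p * a p + b p * b p := by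
    intro p
    rcases mul_self_nonneg (a p) |>.lt_or_eq with h | h
    · nlinarith [mul_self_nonneg (b p)]
    · have ha0 : a p = 0 := by nlinarith
      have hb0 : b p ≠ 0 := fun h' => hne p ⟨ha0, h'⟩
      nlinarith [mul_self_pos.mpr hb0, mul_self_nonneg (a p)]
  have hr_pos : ∀ p, 0 < r p := fun p => Real.sqrt_pos.mpr (hs_pos p)
  have hr_sq : ∀ p, r p * r p = a p * a p + b p * b p := fun p =>
    Real.mul_self_sqrt (hs_pos p).le
  -- derivative of r
  have hs_fd : ∀ p, HasFDerivAt (fun q => a q * a q + b q * b q)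
      ((a p • fderiv ℝ a p + a p • fderiv ℝ a p) +
        (b p • fderiv ℝ b p + b p • fderiv ℝ b p)) p := by
    intro p
    exact ((ha p).hasFDerivAt.mul (ha p).hasFDerivAt).add
      ((hb p).hasFDerivAt.mul (hb p).hasFDerivAt)
  have hr_fd : ∀ p, HasFDerivAt r
      ((1 / (2 * r p)) • ((a p • fderiv ℝ a p + a p • fderiv ℝ a p) +
        (b p • fderiv ℝ b p + b p • fderiv ℝ b p))) p := by
    intro p
    exact (hs_fd p).sqrt (hs_pos p).ne'
  have hrinv_fd : ∀ p, HasFDerivAt (fun q => (r q)⁻¹)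
      ((-(r p ^ 2)⁻¹) • ((1 / (2 * r p)) • ((a p • fderiv ℝ a p + a p • fderiv ℝ a p) +
        (b p • fderiv ℝ b p + b p • fderiv ℝ b p)))) p := by
    intro p
    exact (hasDerivAt_inv (hr_pos p).ne').comp_hasFDerivAt p (hr_fd p)
  -- c1 = a / r has zero derivative
  have hc1_fd : ∀ p, HasFDerivAt (fun q => a q * (r q)⁻¹)
      (a p • ((-(r p ^ 2)⁻¹) • ((1 / (2 * r p)) • ((a p • fderiv ℝ a p + a p • fderiv ℝ a p) +
        (b p • fderiv ℝ b p + b p • fderiv ℝ b p)))) + (r p)⁻¹ • fderiv ℝ a p) p := by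
    intro p
    exact (ha p).hasFDerivAt.mul (hrinv_fd p)
  have hc2_fd : ∀ p, HasFDerivAt (fun q => b q * (r q)⁻¹)
      (b p • ((-(r p ^ 2)⁻¹) • ((1 / (2 * r p)) • ((a p • fderiv ℝ a p + a p • fderiv ℝ a p) +
        (b p • fderiv ℝ b p + b p • fderiv ℝ b p)))) + (r p)⁻¹ • fderiv ℝ b p) p := by
    intro p
    exact (hb p).hasFDerivAt.mul (hrinv_fd p)
  have hD1_zero : ∀ p, (a p • ((-(r p ^ 2)⁻¹) • ((1 / (2 * r p)) •
      ((a p • fderiv ℝ a p + a p • fderiv ℝ a p) +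
        (b p • fderiv ℝ b p + b p • fderiv ℝ b p)))) + (r p)⁻¹ • fderiv ℝ a p)
      = (0 : (ℝ × ℝ) →L[ℝ] ℝ) := by
    intro p
    refine ContinuousLinearMap.ext fun v => ?_
    simp only [ContinuousLinearMap.add_apply, ContinuousLinearMap.coe_smul',
      Pi.smul_apply, smul_eq_mul, ContinuousLinearMap.zero_apply]
    have hk := hkey p v
    have hr2 := hr_sq p
    have hrne := (hr_pos p).ne'
    field_simp
    ring_nf
    linear_combination 2 * ((fderiv ℝ a p v) * hr2 + b p * hk)
  have hD2_zero : ∀ p, (b p • ((-(r p ^ 2)⁻¹) • ((1 / (2 * r p)) •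
      ((a p • fderiv ℝ a p + a p • fderiv ℝ a p) +
        (b p • fderiv ℝ b p + b p • fderiv ℝ b p)))) + (r p)⁻¹ • fderiv ℝ b p)
      = (0 : (ℝ × ℝ) →L[ℝ] ℝ) := by
    intro p
    refine ContinuousLinearMap.ext fun v => ?_
    simp only [ContinuousLinearMap.add_apply, ContinuousLinearMap.coe_smul',
      Pi.smul_apply, smul_eq_mul, ContinuousLinearMap.zero_apply]
    have hk := hkey p v
    have hr2 := hr_sq p
    have hrne := (hr_pos p).ne'
    field_simp
    ring_nf
    linear_combination 2 * ((fderiv ℝ b p v) * hr2 - a p * hk)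
  have hc1_const : ∀ p, a p * (r p)⁻¹ = a 0 * (r 0)⁻¹ := by
    intro p
    exact is_const_of_fderiv_eq_zero (fun q => (hc1_fd q).differentiableAt)
      (fun q => by rw [(hc1_fd q).fderiv, hD1_zero q]) p 0
  have hc2_const : ∀ p, b p * (r p)⁻¹ = b 0 * (r 0)⁻¹ := by
    intro p
    exact is_const_of_fderiv_eq_zero (fun q => (hc2_fd q).differentiableAt)
      (fun q => by rw [(hc2_fd q).fderiv, hD2_zero q]) p 0
  refine ⟨a 0 * (r 0)⁻¹, b 0 * (r 0)⁻¹, ?_, ?_⟩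
  · intro h
    rw [Prod.mk.injEq] at h
    have hr0 := (hr_pos 0).ne'
    exact hne 0 ⟨by have := h.1; field_simp at this; simpa using this,
      by have := h.2; field_simp at this; simpa using this⟩
  · intro p
    refine ⟨r p, hr_pos p, ?_, ?_⟩
    · have := hc1_const p
      have hrne := (hr_pos p).ne'
      have hr0 := (hr_pos 0).ne'
      field_simp at this ⊢
      linear_combination this
    · have := hc2_const p
      have hrne := (hr_pos p).ne'
      have hr0 := (hr_pos 0).ne'
      field_simp at this ⊢
      linear_combination this

/-- if a Lie algebra V of vector fields on ℝ² contains two commuting,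
pointwise independent vector fields X₁, X₂, then any rank-one distribution (spanned by a
nonvanishing smooth vector field W) invariant under V is spanned by a constant-coefficient
combination λ₁X₁ + λ₂X₂. -/
theorem stmt_15 (V : Set (ℝ × ℝ → ℝ × ℝ)) (X₁ X₂ W : ℝ × ℝ → ℝ × ℝ)
    (hVsmooth : ∀ X ∈ V, ContDiff ℝ (⊤ : ℕ∞) X)
    (hVbr : ∀ X ∈ V, ∀ Y ∈ V, vbracket X Y ∈ V)
    (h1V : X₁ ∈ V) (h2V : X₂ ∈ V)
    (h1 : ContDiff ℝ (⊤ : ℕ∞) X₁) (h2 : ContDiff ℝ (⊤ : ℕ∞) X₂)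
    (hcomm : ∀ p, vbracket X₁ X₂ p = 0)
    (hind : ∀ p, (X₁ p).1 * (X₂ p).2 - (X₁ p).2 * (X₂ p).1 ≠ 0)
    (hW : ContDiff ℝ (⊤ : ℕ∞) W) (hWne : ∀ p, W p ≠ 0)
    (hinvariant : ∀ Y : ℝ × ℝ → ℝ × ℝ, ContDiff ℝ (⊤ : ℕ∞) Y →
      (∀ p, Y p ∈ Submodule.span ℝ {W p}) →
      ∀ X ∈ V, ∀ p, vbracket Y X p ∈ Submodule.span ℝ {W p}) :
    ∃ l1 l2 : ℝ, (l1, l2) ≠ (0, 0) ∧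
      ∀ p, Submodule.span ℝ {W p} = Submodule.span ℝ {l1 • X₁ p + l2 • X₂ p} := by
  have hX1d : Differentiable ℝ X₁ := h1.differentiable (by simp)
  have hX2d : Differentiable ℝ X₂ := h2.differentiable (by simp)
  have hWd : Differentiable ℝ W := hW.differentiable (by simp)
  set a : ℝ × ℝ → ℝ := fun p => ((W p).1 * (X₂ p).2 - (W p).2 * (X₂ p).1) /
    ((X₁ p).1 * (X₂ p).2 - (X₁ p).2 * (X₂ p).1) with hadef
  set b : ℝ × ℝ → ℝ := fun p => ((X₁ p).1 * (W p).2 - (X₁ p).2 * (W p).1) /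
    ((X₁ p).1 * (X₂ p).2 - (X₁ p).2 * (X₂ p).1) with hbdef
  have hden : ContDiff ℝ (⊤ : ℕ∞) (fun p : ℝ × ℝ => (X₁ p).1 * (X₂ p).2 - (X₁ p).2 * (X₂ p).1) := by
    fun_prop
  have hnum1 : ContDiff ℝ (⊤ : ℕ∞) (fun p : ℝ × ℝ => (W p).1 * (X₂ p).2 - (W p).2 * (X₂ p).1) := by
    fun_prop
  have hnum2 : ContDiff ℝ (⊤ : ℕ∞) (fun p : ℝ × ℝ => (X₁ p).1 * (W p).2 - (X₁ p).2 * (W p).1) := by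
    fun_prop
  have had : Differentiable ℝ a := by
    rw [hadef]
    exact (hnum1.div hden hind).differentiable (by simp)
  have hbd : Differentiable ℝ b := by
    rw [hbdef]
    exact (hnum2.div hden hind).differentiable (by simp)
  have hab : ∀ p, W p = a p • X₁ p + b p • X₂ p := by
    intro p
    have hΔ := hind p
    rw [Prod.ext_iff]
    constructor
    · simp only [hadef, hbdef, Prod.fst_add, Prod.smul_fst, smul_eq_mul]
      rw [div_mul_eq_mul_div, div_mul_eq_mul_div, ← add_div, eq_div_iff hΔ]
      ring
    · simp only [hadef, hbdef, Prod.snd_add, Prod.smul_snd, smul_eq_mul]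
      rw [div_mul_eq_mul_div, div_mul_eq_mul_div, ← add_div, eq_div_iff hΔ]
      ring
  have habne : ∀ p, ¬(a p = 0 ∧ b p = 0) := by
    rintro p ⟨h1', h2'⟩
    apply hWne p
    rw [hab p, h1', h2']
    simp
  have hcoef : ∀ (p : ℝ × ℝ) (α β : ℝ), α • X₁ p + β • X₂ p = 0 → α = 0 ∧ β = 0 := by
    intro p α β h
    have e1 : α * (X₁ p).1 + β * (X₂ p).1 = 0 := by
      have := congrArg Prod.fst h; simpa using this
    have e2 : α * (X₁ p).2 + β * (X₂ p).2 = 0 := by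
      have := congrArg Prod.snd h; simpa using this
    have hΔ := hind p
    constructor
    · have hz : α * ((X₁ p).1 * (X₂ p).2 - (X₁ p).2 * (X₂ p).1) = 0 := by
        linear_combination (X₂ p).2 * e1 - (X₂ p).1 * e2
      exact (mul_eq_zero.mp hz).resolve_right hΔ
    · have hz : β * ((X₁ p).1 * (X₂ p).2 - (X₁ p).2 * (X₂ p).1) = 0 := by
        linear_combination (X₁ p).1 * e2 - (X₁ p).2 * e1
      exact (mul_eq_zero.mp hz).resolve_right hΔ
  have hc12 : ∀ p, fderiv ℝ X₂ p (X₁ p) = fderiv ℝ X₁ p (X₂ p) := by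
    intro p
    have h := hcomm p
    simp only [vbracket] at h
    exact sub_eq_zero.mp h
  have hWfd : ∀ p, HasFDerivAt W
      (a p • fderiv ℝ X₁ p + (fderiv ℝ a p).smulRight (X₁ p) +
        (b p • fderiv ℝ X₂ p + (fderiv ℝ b p).smulRight (X₂ p))) p := by
    intro p
    have h := ((had p).hasFDerivAt.smul (hX1d p).hasFDerivAt).add
      ((hbd p).hasFDerivAt.smul (hX2d p).hasFDerivAt)
    have hWeq : W = fun q => a q • X₁ q + b q • X₂ q := funext hab
    rw [hWeq]
    exact h
  have hDW : ∀ p v, fderiv ℝ W p v =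
      a p • fderiv ℝ X₁ p v + fderiv ℝ a p v • X₁ p +
        (b p • fderiv ℝ X₂ p v + fderiv ℝ b p v • X₂ p) := by
    intro p v
    rw [(hWfd p).fderiv]
    simp [ContinuousLinearMap.add_apply, ContinuousLinearMap.smulRight_apply]
  have hfW : ∀ (Z : ℝ × ℝ → ℝ × ℝ) p, fderiv ℝ Z p (W p) =
      a p • fderiv ℝ Z p (X₁ p) + b p • fderiv ℝ Z p (X₂ p) := by
    intro Z p
    rw [hab p]
    simp [map_add, map_smul]
  have hk1 : ∀ p, b p * fderiv ℝ a p (X₁ p) = a p * fderiv ℝ b p (X₁ p) := by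
    intro p
    have hmem := hinvariant W hW (fun q => Submodule.mem_span_singleton_self _) X₁ h1V p
    obtain ⟨c, hc⟩ := Submodule.mem_span_singleton.mp hmem
    have hbr : vbracket W X₁ p =
        (-(fderiv ℝ a p (X₁ p))) • X₁ p + (-(fderiv ℝ b p (X₁ p))) • X₂ p := by
      show fderiv ℝ X₁ p (W p) - fderiv ℝ W p (X₁ p) = _
      rw [hfW X₁ p, hDW p (X₁ p), ← hc12 p]
      simp only [neg_smul]
      abel
    rw [hbr] at hc
    have w1 : (W p).1 = a p * (X₁ p).1 + b p * (X₂ p).1 := by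
      rw [hab p]; simp
    have w2 : (W p).2 = a p * (X₁ p).2 + b p * (X₂ p).2 := by
      rw [hab p]; simp
    have e1 : c * (W p).1 =
        -(fderiv ℝ a p (X₁ p)) * (X₁ p).1 + -(fderiv ℝ b p (X₁ p)) * (X₂ p).1 := by
      have := congrArg Prod.fst hc; simpa using this
    have e2 : c * (W p).2 =
        -(fderiv ℝ a p (X₁ p)) * (X₁ p).2 + -(fderiv ℝ b p (X₁ p)) * (X₂ p).2 := by
      have := congrArg Prod.snd hc; simpa using this
    obtain ⟨ha0, hb0⟩ := hcoef p (c * a p + fderiv ℝ a p (X₁ p))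
      (c * b p + fderiv ℝ b p (X₁ p)) (by
        rw [Prod.ext_iff]
        constructor
        · simp only [Prod.fst_add, Prod.smul_fst, smul_eq_mul, Prod.fst_zero]
          linear_combination e1 - c * w1
        · simp only [Prod.snd_add, Prod.smul_snd, smul_eq_mul, Prod.snd_zero]
          linear_combination e2 - c * w2)
    linear_combination b p * ha0 - a p * hb0
  have hk2 : ∀ p, b p * fderiv ℝ a p (X₂ p) = a p * fderiv ℝ b p (X₂ p) := by
    intro p
    have hmem := hinvariant W hW (fun q => Submodule.mem_span_singleton_self _) X₂ h2V p
    obtain ⟨c, hc⟩ := Submodule.mem_span_singleton.mp hmem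
    have hbr : vbracket W X₂ p =
        (-(fderiv ℝ a p (X₂ p))) • X₁ p + (-(fderiv ℝ b p (X₂ p))) • X₂ p := by
      show fderiv ℝ X₂ p (W p) - fderiv ℝ W p (X₂ p) = _
      rw [hfW X₂ p, hDW p (X₂ p), hc12 p]
      simp only [neg_smul]
      abel
    rw [hbr] at hc
    have w1 : (W p).1 = a p * (X₁ p).1 + b p * (X₂ p).1 := by
      rw [hab p]; simp
    have w2 : (W p).2 = a p * (X₁ p).2 + b p * (X₂ p).2 := by
      rw [hab p]; simp
    have e1 : c * (W p).1 =
        -(fderiv ℝ a p (X₂ p)) * (X₁ p).1 + -(fderiv ℝ b p (X₂ p)) * (X₂ p).1 := by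
      have := congrArg Prod.fst hc; simpa using this
    have e2 : c * (W p).2 =
        -(fderiv ℝ a p (X₂ p)) * (X₁ p).2 + -(fderiv ℝ b p (X₂ p)) * (X₂ p).2 := by
      have := congrArg Prod.snd hc; simpa using this
    obtain ⟨ha0, hb0⟩ := hcoef p (c * a p + fderiv ℝ a p (X₂ p))
      (c * b p + fderiv ℝ b p (X₂ p)) (by
        rw [Prod.ext_iff]
        constructor
        · simp only [Prod.fst_add, Prod.smul_fst, smul_eq_mul, Prod.fst_zero]
          linear_combination e1 - c * w1
        · simp only [Prod.snd_add, Prod.smul_snd, smul_eq_mul, Prod.snd_zero]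
          linear_combination e2 - c * w2)
    linear_combination b p * ha0 - a p * hb0
  have hkey : ∀ p v, b p * fderiv ℝ a p v = a p * fderiv ℝ b p v := by
    intro p v
    obtain ⟨s, t, hv⟩ : ∃ s t : ℝ, v = s • X₁ p + t • X₂ p := by
      have hΔ := hind p
      refine ⟨(v.1 * (X₂ p).2 - v.2 * (X₂ p).1) /
        ((X₁ p).1 * (X₂ p).2 - (X₁ p).2 * (X₂ p).1),
        ((X₁ p).1 * v.2 - (X₁ p).2 * v.1) /
        ((X₁ p).1 * (X₂ p).2 - (X₁ p).2 * (X₂ p).1), ?_⟩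
      rw [Prod.ext_iff]
      constructor
      · simp only [Prod.fst_add, Prod.smul_fst, smul_eq_mul]
        rw [div_mul_eq_mul_div, div_mul_eq_mul_div, ← add_div, eq_div_iff hΔ]
        ring
      · simp only [Prod.snd_add, Prod.smul_snd, smul_eq_mul]
        rw [div_mul_eq_mul_div, div_mul_eq_mul_div, ← add_div, eq_div_iff hΔ]
        ring
    rw [hv]
    simp only [map_add, map_smul, smul_eq_mul]
    linear_combination s * hk1 p + t * hk2 p
  obtain ⟨l1, l2, hl, hcl⟩ := aux_const_dir a b had hbd habne hkey
  refine ⟨l1, l2, hl, fun p => ?_⟩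
  obtain ⟨c, hcpos, hca, hcb⟩ := hcl p
  have hWp : W p = c • (l1 • X₁ p + l2 • X₂ p) := by
    rw [hab p, hca, hcb, smul_add, smul_smul, smul_smul]
  rw [hWp]
  exact Submodule.span_singleton_smul_eq (isUnit_iff_ne_zero.mpr hcpos.ne') _
end

section
/- For the vector fields X₁ = -x∂_y, X₂ = (1/2)(y∂_y - x∂_x), X₃ = y∂_x + (c/x³)∂_y on {x ≠ 0} ⊂ ℝ², the symmetric tensor field G = X₁⊗X₃ + X₃⊗X₁ - 2X₂⊗X₂ equals -(x²/2)∂_x⊗∂_x - (2c/x² + y²/2)∂_y⊗∂_y - (xy/2)(∂_x⊗∂_y + ∂_y⊗∂_x), and the determinant of its component matrix equals c; moreover L_{Xᵢ}G = 0 for i = 1,2,3. -/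
/-- xx-component of the Lie derivative of a contravariant 2-tensor (Gxx, Gxy, Gyy)
along X: (L_X G)^{xx} = X(Gxx) - 2(∂ₓXˣ Gxx + ∂ᵧXˣ Gxy). -/
noncomputable def lieCXX (X : ℝ × ℝ → ℝ × ℝ) (Gxx Gxy Gyy : ℝ × ℝ → ℝ) (p : ℝ × ℝ) : ℝ :=
  fderiv ℝ Gxx p (X p) - 2 * (pdx (Vx X) p * Gxx p + pdy (Vx X) p * Gxy p)

/-- xy-component of the Lie derivative of a contravariant 2-tensor along X. -/
noncomputable def lieCXY (X : ℝ × ℝ → ℝ × ℝ) (Gxx Gxy Gyy : ℝ × ℝ → ℝ) (p : ℝ × ℝ) : ℝ :=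
  fderiv ℝ Gxy p (X p) - (pdx (Vx X) p * Gxy p + pdy (Vx X) p * Gyy p)
    - (pdx (Vy X) p * Gxx p + pdy (Vy X) p * Gxy p)

/-- yy-component of the Lie derivative of a contravariant 2-tensor along X. -/
noncomputable def lieCYY (X : ℝ × ℝ → ℝ × ℝ) (Gxx Gxy Gyy : ℝ × ℝ → ℝ) (p : ℝ × ℝ) : ℝ :=
  fderiv ℝ Gyy p (X p) - 2 * (pdx (Vy X) p * Gxy p + pdy (Vy X) p * Gyy p)

/-- The Milne–Pinney vector fields. -/
noncomputable def XMP1 : ℝ × ℝ → ℝ × ℝ := fun p => ((0 : ℝ), -p.1)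
noncomputable def XMP2 : ℝ × ℝ → ℝ × ℝ := fun p => (-p.1 / 2, p.2 / 2)
noncomputable def XMP3 (c : ℝ) : ℝ × ℝ → ℝ × ℝ := fun p => (p.2, c / p.1 ^ 3)

/-- Components of the Casimir tensor field G = X₁⊗X₃ + X₃⊗X₁ - 2 X₂⊗X₂. -/
noncomputable def GMPxx (c : ℝ) : ℝ × ℝ → ℝ := fun p =>
  (XMP1 p).1 * (XMP3 c p).1 + (XMP3 c p).1 * (XMP1 p).1 - 2 * ((XMP2 p).1 * (XMP2 p).1)
noncomputable def GMPxy (c : ℝ) : ℝ × ℝ → ℝ := fun p =>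
  (XMP1 p).1 * (XMP3 c p).2 + (XMP3 c p).1 * (XMP1 p).2 - 2 * ((XMP2 p).1 * (XMP2 p).2)
noncomputable def GMPyy (c : ℝ) : ℝ × ℝ → ℝ := fun p =>
  (XMP1 p).2 * (XMP3 c p).2 + (XMP3 c p).2 * (XMP1 p).2 - 2 * ((XMP2 p).2 * (XMP2 p).2)

/-!
The fields satisfy the sl(2) relations `[X₁, X₂] = X₁`, `[X₁, X₃] = 2 X₂`, `[X₂, X₃] = X₃`, and
`L_X` acts on a symmetrised product `Y ⊗ Z + Z ⊗ Y` as a derivation through brackets. Hence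
`L_{Xᵢ} G` is the image of `ad(vᵢ)` applied to the Casimir element, which vanishes since the Casimir
element is ad-invariant. The components of `G` and its determinant are direct computations.
-/

/-- The `(xx, xy, yy)` components of `u ⊗ v + v ⊗ u`. -/
def symTensor (u v : ℝ × ℝ) : ℝ × ℝ × ℝ :=
  (u.1 * v.1 + v.1 * u.1, u.1 * v.2 + v.1 * u.2, u.2 * v.2 + v.2 * u.2)

noncomputable def lieC (X : ℝ × ℝ → ℝ × ℝ) (T : ℝ × ℝ → ℝ × ℝ × ℝ) (p : ℝ × ℝ) :
    ℝ × ℝ × ℝ :=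
  (lieCXX X (fun q => (T q).1) (fun q => (T q).2.1) (fun q => (T q).2.2) p,
   lieCXY X (fun q => (T q).1) (fun q => (T q).2.1) (fun q => (T q).2.2) p,
   lieCYY X (fun q => (T q).1) (fun q => (T q).2.1) (fun q => (T q).2.2) p)

theorem ContinuousLinearMap.apply_eq_fst_smul_add_snd_smul {E : Type*} [AddCommGroup E]
    [Module ℝ E] [TopologicalSpace E] (L : ℝ × ℝ →L[ℝ] E) (w : ℝ × ℝ) :
    L w = w.1 • L (1, 0) + w.2 • L (0, 1) := by
  conv_lhs => rw [show w = w.1 • (1, 0) + w.2 • (0, 1) by ext <;> simp]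
  rw [map_add, map_smul, map_smul]

theorem DifferentiableAt.symTensor {Y Z : ℝ × ℝ → ℝ × ℝ} {p : ℝ × ℝ}
    (hY : DifferentiableAt ℝ Y p) (hZ : DifferentiableAt ℝ Z p) :
    DifferentiableAt ℝ (fun q => symTensor (Y q) (Z q)) p := by
  unfold _root_.symTensor
  fun_prop

theorem lieC_sub {X : ℝ × ℝ → ℝ × ℝ} {T S : ℝ × ℝ → ℝ × ℝ × ℝ} {p : ℝ × ℝ}
    (hT : DifferentiableAt ℝ T p) (hS : DifferentiableAt ℝ S p) :
    lieC X (fun q => T q - S q) p = lieC X T p - lieC X S p := by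
  unfold lieC lieCXX lieCXY lieCYY
  simp (disch := fun_prop) only [Prod.fst_sub, Prod.snd_sub, fderiv_fun_sub]
  simp only [sub_apply, Prod.mk_sub_mk, Prod.mk.injEq]
  refine ⟨?_, ?_, ?_⟩ <;> ring

theorem lieC_symTensor {X Y Z : ℝ × ℝ → ℝ × ℝ} {p : ℝ × ℝ} (hX : DifferentiableAt ℝ X p)
    (hY : DifferentiableAt ℝ Y p) (hZ : DifferentiableAt ℝ Z p) :
    lieC X (fun q => symTensor (Y q) (Z q)) p =
      symTensor (vbracket X Y p) (Z p) + symTensor (Y p) (vbracket X Z p) := by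
  have hY₁ := hY.fst
  have hY₂ := hY.snd
  have hZ₁ := hZ.fst
  have hZ₂ := hZ.snd
  unfold lieC lieCXX lieCXY lieCYY pdx pdy Vx Vy symTensor vbracket
  simp (disch := fun_prop) only [fderiv_fun_add, fderiv_fun_mul, fderiv.fst, fderiv.snd]
  simp only [add_apply, smul_apply, ContinuousLinearMap.comp_apply, ContinuousLinearMap.coe_fst',
    ContinuousLinearMap.coe_snd', smul_eq_mul]
  rw [(fderiv ℝ Y p).apply_eq_fst_smul_add_snd_smul (X p),
    (fderiv ℝ Z p).apply_eq_fst_smul_add_snd_smul (X p),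
    (fderiv ℝ X p).apply_eq_fst_smul_add_snd_smul (Y p),
    (fderiv ℝ X p).apply_eq_fst_smul_add_snd_smul (Z p)]
  simp only [Prod.mk_add_mk, Prod.fst_add, Prod.snd_add, Prod.fst_sub, Prod.snd_sub,
    Prod.smul_fst, Prod.smul_snd, smul_eq_mul, Prod.mk.injEq]
  refine ⟨?_, ?_, ?_⟩ <;> ring

theorem vbracket_swap (X Y : ℝ × ℝ → ℝ × ℝ) (p : ℝ × ℝ) : vbracket Y X p = -vbracket X Y p :=
  (neg_sub _ _).symm

theorem vbracket_self (X : ℝ × ℝ → ℝ × ℝ) (p : ℝ × ℝ) : vbracket X X p = 0 :=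
  sub_self _

theorem fderiv_XMP1_apply (p v : ℝ × ℝ) : fderiv ℝ XMP1 p v = XMP1 v := by
  have hL : XMP1 = ⇑((0 : ℝ × ℝ →L[ℝ] ℝ).prod (-ContinuousLinearMap.fst ℝ ℝ ℝ)) := rfl
  rw [hL, ContinuousLinearMap.fderiv]

theorem fderiv_XMP2_apply (p v : ℝ × ℝ) : fderiv ℝ XMP2 p v = XMP2 v := by
  have hL : XMP2 = ⇑((-(1 / 2 : ℝ) • ContinuousLinearMap.fst ℝ ℝ ℝ).prod
      ((1 / 2 : ℝ) • ContinuousLinearMap.snd ℝ ℝ ℝ)) := by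
    funext q
    simp only [XMP2, ContinuousLinearMap.prod_apply, smul_apply, ContinuousLinearMap.coe_fst',
      ContinuousLinearMap.coe_snd', smul_eq_mul, Prod.mk.injEq]
    constructor <;> ring
  rw [hL, ContinuousLinearMap.fderiv]

theorem hasFDerivAt_XMP3 (c : ℝ) {p : ℝ × ℝ} (hp : p.1 ≠ 0) :
    HasFDerivAt (XMP3 c) ((ContinuousLinearMap.snd ℝ ℝ ℝ).prod
      ((-(3 * c) / p.1 ^ 4) • ContinuousLinearMap.fst ℝ ℝ ℝ)) p := by
  have hd : HasDerivAt (fun t : ℝ => c / t ^ 3) (-(3 * c) / p.1 ^ 4) p.1 := by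
    refine ((hasDerivAt_const p.1 c).div (hasDerivAt_pow 3 p.1)
      (pow_ne_zero 3 hp)).congr_deriv ?_
    field_simp
    ring
  exact hasFDerivAt_snd.prodMk (hd.comp_hasFDerivAt p hasFDerivAt_fst)

theorem fderiv_XMP3_apply (c : ℝ) {p : ℝ × ℝ} (hp : p.1 ≠ 0) (v : ℝ × ℝ) :
    fderiv ℝ (XMP3 c) p v = (v.2, -(3 * c) / p.1 ^ 4 * v.1) := by
  simp [(hasFDerivAt_XMP3 c hp).fderiv]

theorem differentiableAt_XMP1 (p : ℝ × ℝ) : DifferentiableAt ℝ XMP1 p := by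
  unfold XMP1
  fun_prop

theorem differentiableAt_XMP2 (p : ℝ × ℝ) : DifferentiableAt ℝ XMP2 p := by
  unfold XMP2
  fun_prop

theorem vbracket_XMP1_XMP2 (p : ℝ × ℝ) : vbracket XMP1 XMP2 p = XMP1 p := by
  simp only [vbracket, fderiv_XMP1_apply, fderiv_XMP2_apply, XMP1, XMP2, Prod.mk_sub_mk,
    Prod.mk.injEq]
  constructor <;> ring

theorem vbracket_XMP1_XMP3 (c : ℝ) {p : ℝ × ℝ} (hp : p.1 ≠ 0) :
    vbracket XMP1 (XMP3 c) p = (2 : ℝ) • XMP2 p := by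
  simp only [vbracket, fderiv_XMP1_apply, fderiv_XMP3_apply c hp, XMP1, XMP2, XMP3,
    Prod.mk_sub_mk, Prod.smul_mk, smul_eq_mul, Prod.mk.injEq]
  constructor <;> ring

theorem vbracket_XMP2_XMP3 (c : ℝ) {p : ℝ × ℝ} (hp : p.1 ≠ 0) :
    vbracket XMP2 (XMP3 c) p = XMP3 c p := by
  simp only [vbracket, fderiv_XMP2_apply, fderiv_XMP3_apply c hp, XMP2, XMP3,
    Prod.mk_sub_mk, Prod.mk.injEq]
  constructor
  · ring
  · field_simp
    ring

noncomputable def casimirTensor (c : ℝ) : ℝ × ℝ → ℝ × ℝ × ℝ :=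
  fun q => symTensor (XMP1 q) (XMP3 c q) - symTensor (XMP2 q) (XMP2 q)

theorem lieC_casimirTensor (c : ℝ) {p : ℝ × ℝ} (hp : p.1 ≠ 0) {X : ℝ × ℝ → ℝ × ℝ}
    (hX : X ∈ ({XMP1, XMP2, XMP3 c} : Set (ℝ × ℝ → ℝ × ℝ))) :
    lieC X (casimirTensor c) p = 0 := by
  have h₁ := differentiableAt_XMP1 p
  have h₂ := differentiableAt_XMP2 p
  have h₃ : DifferentiableAt ℝ (XMP3 c) p := (hasFDerivAt_XMP3 c hp).differentiableAt
  have hXp : DifferentiableAt ℝ X p := by rcases hX with rfl | rfl | rfl <;> assumption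
  unfold casimirTensor
  rw [lieC_sub (h₁.symTensor h₃) (h₂.symTensor h₂), lieC_symTensor hXp h₁ h₃,
    lieC_symTensor hXp h₂ h₂]
  rcases hX with rfl | rfl | rfl <;>
  [rw [vbracket_self, vbracket_XMP1_XMP2, vbracket_XMP1_XMP3 c hp];
   rw [vbracket_swap, vbracket_XMP1_XMP2, vbracket_self, vbracket_XMP2_XMP3 c hp];
   rw [vbracket_swap, vbracket_XMP1_XMP3 c hp, vbracket_self, vbracket_swap XMP2,
     vbracket_XMP2_XMP3 c hp]] <;>
  ext <;>
  simp only [symTensor, Prod.fst_add, Prod.snd_add, Prod.fst_sub, Prod.snd_sub, Prod.fst_neg,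
    Prod.snd_neg, Prod.fst_zero, Prod.snd_zero, Prod.smul_fst, Prod.smul_snd, smul_eq_mul] <;>
  ring

theorem GMP_eq_casimirTensor (c : ℝ) :
    GMPxx c = (fun q => (casimirTensor c q).1) ∧ GMPxy c = (fun q => (casimirTensor c q).2.1) ∧
      GMPyy c = (fun q => (casimirTensor c q).2.2) := by
  refine ⟨?_, ?_, ?_⟩ <;> funext q <;>
  simp only [GMPxx, GMPxy, GMPyy, casimirTensor, symTensor, Prod.fst_sub, Prod.snd_sub] <;> ring

theorem GMPxx_apply (c : ℝ) (p : ℝ × ℝ) : GMPxx c p = -(p.1 ^ 2 / 2) := by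
  simp only [GMPxx, XMP1, XMP2, XMP3]
  ring

theorem GMPxy_apply (c : ℝ) (p : ℝ × ℝ) : GMPxy c p = -(p.1 * p.2 / 2) := by
  simp only [GMPxy, XMP1, XMP2, XMP3]
  ring

theorem GMPyy_apply (c : ℝ) {p : ℝ × ℝ} (hp : p.1 ≠ 0) :
    GMPyy c p = -(2 * c / p.1 ^ 2 + p.2 ^ 2 / 2) := by
  simp only [GMPyy, XMP1, XMP2, XMP3]
  field_simp
  ring

/-- on {x ≠ 0}, G = X₁⊗X₃ + X₃⊗X₁ - 2X₂⊗X₂ has components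
-x²/2, -xy/2, -(2c/x² + y²/2), its determinant equals c, and L_{Xᵢ}G = 0 for i=1,2,3. -/
theorem stmt_19 (c : ℝ) :
    ∀ p : ℝ × ℝ, p.1 ≠ 0 →
      (GMPxx c p = -(p.1 ^ 2 / 2) ∧
       GMPxy c p = -(p.1 * p.2 / 2) ∧
       GMPyy c p = -(2 * c / p.1 ^ 2 + p.2 ^ 2 / 2)) ∧
      GMPxx c p * GMPyy c p - GMPxy c p ^ 2 = c ∧
      (∀ X ∈ ({XMP1, XMP2, XMP3 c} : Set (ℝ × ℝ → ℝ × ℝ)),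
        lieCXX X (GMPxx c) (GMPxy c) (GMPyy c) p = 0 ∧
        lieCXY X (GMPxx c) (GMPxy c) (GMPyy c) p = 0 ∧
        lieCYY X (GMPxx c) (GMPxy c) (GMPyy c) p = 0) := by
  intro p hp
  refine ⟨⟨GMPxx_apply c p, GMPxy_apply c p, GMPyy_apply c hp⟩, ?_, fun X hX => ?_⟩
  · rw [GMPxx_apply, GMPxy_apply, GMPyy_apply c hp]
    field_simp
    ring
  · obtain ⟨hxx, hxy, hyy⟩ := GMP_eq_casimirTensor c
    simpa [hxx, hxy, hyy, lieC] using lieC_casimirTensor c hp hX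
end
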